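/- For every finite simple graph G with vertex set V and all subsets X, Y, T ⊆ V, one has |Γ_T(X)| + |Γ_T(Y)| ≥ |Γ_T(X \ Y⁺)| + |Γ_T(Y \ X⁺)|. -/

import Mathlib

/-!
By inclusion–exclusion it suffices that `Γ(X \ Y⁺) ∪ Γ(Y \ X⁺) ⊆ Γ(X) ∪ Γ(Y)` and
`Γ(X \ Y⁺) ∩ Γ(Y \ X⁺) ⊆ Γ(X) ∩ Γ(Y)`. Both hold because no vertex of `Y` is adjacent to
`X \ Y⁺`: such a neighbour would put that vertex of `X \ Y⁺` into `Y⁺`.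
-/

/-- `nbr G X` is Γ(X): the set of vertices outside `X` adjacent to a vertex of `X`. -/
def nbr {V : Type*} [Fintype V] [DecidableEq V] (G : SimpleGraph V) [DecidableRel G.Adj]
    (X : Finset V) : Finset V :=
  Finset.univ.filter (fun v => v ∉ X ∧ ∃ u ∈ X, G.Adj u v)

/-- `cl G X` is X⁺ = X ∪ Γ(X). -/
def cl {V : Type*} [Fintype V] [DecidableEq V] (G : SimpleGraph V) [DecidableRel G.Adj]
    (X : Finset V) : Finset V :=
  X ∪ nbr G X

open Finset

section Neighbourhood

variable {V : Type*} [Fintype V] [DecidableEq V] (G : SimpleGraph V) [DecidableRel G.Adj]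

@[simp]
lemma mem_nbr {S : Finset V} {v : V} : v ∈ nbr G S ↔ v ∉ S ∧ ∃ u ∈ S, G.Adj u v := by
  simp [nbr]

@[simp]
lemma mem_cl {S : Finset V} {v : V} : v ∈ cl G S ↔ v ∈ S ∨ v ∈ nbr G S := by
  simp [cl]

lemma mem_cl_of_adj {S : Finset V} {u v : V} (hv : v ∈ S) (huv : G.Adj u v) : u ∈ cl G S := by
  by_cases hu : u ∈ S
  · exact (mem_cl G).2 (Or.inl hu)
  · exact (mem_cl G).2 (Or.inr ((mem_nbr G).2 ⟨hu, v, hv, huv.symm⟩))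

lemma notMem_of_mem_nbr_sdiff_cl {A B : Finset V} {v : V} (hv : v ∈ nbr G (A \ cl G B)) :
    v ∉ B := by
  obtain ⟨-, u, hu, huv⟩ := (mem_nbr G).1 hv
  exact fun hvB => (mem_sdiff.1 hu).2 (mem_cl_of_adj G hvB huv)

lemma nbr_sdiff_cl_subset_union (A B : Finset V) :
    nbr G (A \ cl G B) ⊆ nbr G A ∪ nbr G B := by
  intro v hv
  have hvB := notMem_of_mem_nbr_sdiff_cl G hv
  obtain ⟨hvAB, u, hu, huv⟩ := (mem_nbr G).1 hv
  by_cases hvA : v ∈ A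
  · have hvcl : v ∈ cl G B := by_contra fun h => hvAB (mem_sdiff.2 ⟨hvA, h⟩)
    exact mem_union_right _ (((mem_cl G).1 hvcl).resolve_left hvB)
  · exact mem_union_left _ ((mem_nbr G).2 ⟨hvA, u, (mem_sdiff.1 hu).1, huv⟩)

lemma nbr_sdiff_cl_inter_subset_inter (A B : Finset V) :
    nbr G (A \ cl G B) ∩ nbr G (B \ cl G A) ⊆ nbr G A ∩ nbr G B := by
  intro v hv
  obtain ⟨hvA', hvB'⟩ := mem_inter.1 hv
  obtain ⟨-, u, hu, huv⟩ := (mem_nbr G).1 hvA'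
  obtain ⟨-, w, hw, hwv⟩ := (mem_nbr G).1 hvB'
  exact mem_inter.2
    ⟨(mem_nbr G).2 ⟨notMem_of_mem_nbr_sdiff_cl G hvB', u, (mem_sdiff.1 hu).1, huv⟩,
     (mem_nbr G).2 ⟨notMem_of_mem_nbr_sdiff_cl G hvA', w, (mem_sdiff.1 hw).1, hwv⟩⟩

end Neighbourhood

lemma Finset.card_add_card_le_of_union_subset_of_inter_subset {α : Type*} [DecidableEq α]
    {A B C D : Finset α} (hunion : A ∪ B ⊆ C ∪ D) (hinter : A ∩ B ⊆ C ∩ D) :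
    #A + #B ≤ #C + #D := by
  rw [← card_union_add_card_inter A B, ← card_union_add_card_inter C D]
  exact Nat.add_le_add (card_le_card hunion) (card_le_card hinter)

theorem stmt_2 {V : Type*} [Fintype V] [DecidableEq V]
    (G : SimpleGraph V) [DecidableRel G.Adj] (X Y T : Finset V) :
    (nbr G (X \ cl G Y) ∩ T).card + (nbr G (Y \ cl G X) ∩ T).card ≤
      (nbr G X ∩ T).card + (nbr G Y ∩ T).card := by
  apply card_add_card_le_of_union_subset_of_inter_subset
  · rw [← union_inter_distrib_right, ← union_inter_distrib_right]
    refine inter_subset_inter_right (union_subset ?_ ?_)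
    · exact nbr_sdiff_cl_subset_union G X Y
    · exact (nbr_sdiff_cl_subset_union G Y X).trans (union_comm _ _).subset
  · rw [← inter_inter_distrib_right, ← inter_inter_distrib_right]
    exact inter_subset_inter_right (nbr_sdiff_cl_inter_subset_inter G X Y)
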